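/- Converse expansion inequality under a consistency side-condition: let n, m ≥ 0, A ⊆ Act, and a_i, b_j ∈ Act for each i < n and j < m. Assume that no p_i with a_i ∈ A and a_i ≠ b_j for all j < m lies in F, and no q_j with b_j ∈ A and b_j ≠ a_i for all i < n lies in F. Then ((□Ω₁) □ (□Ω₂)) □ (□Ω₃) ⊑_RS □_{i<n} a_i.p_i ∥_A □_{j<m} b_j.q_j, where □Ω₁ is the general external choice of all a_i.(p_i ∥_A □_{j<m} b_j.q_j) with i < n and a_i ∉ A, □Ω₂ is the general external choice of all b_j.((□_{i<n} a_i.p_i) ∥_A q_j) with j < m and b_j ∉ A, and □Ω₃ is the general external choice of all a_i.(p_i ∥_A q_j) with i < n, j < m and a_i = b_j ∈ A. -/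

import Mathlib

open Classical

/-- Visible actions plus the invisible action τ. -/
inductive ActT (Act : Type) : Type where
  | act : Act → ActT Act
  | tau : ActT Act

/-- Processes of the recursion-free calculus CLL. -/
inductive Proc (Act : Type) : Type where
  | nil  : Proc Act                                -- 0
  | bot  : Proc Act                                -- ⊥
  | pre  : ActT Act → Proc Act → Proc Act          -- α.t
  | ec   : Proc Act → Proc Act → Proc Act          -- t □ t
  | conj : Proc Act → Proc Act → Proc Act          -- t ∧ t
  | disj : Proc Act → Proc Act → Proc Act          -- t ∨ t
  | par  : Set Act → Proc Act → Proc Act → Proc Act -- t ∥_A t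

namespace Proc

variable {Act : Type}

/-- Whether a process has a τ-transition (structural stratification used for
the negative premises of the SOS rules). -/
def hasTau : Proc Act → Prop
  | nil => False
  | bot => False
  | pre a _ => a = ActT.tau
  | ec t₁ t₂ => hasTau t₁ ∨ hasTau t₂
  | conj t₁ t₂ => hasTau t₁ ∨ hasTau t₂
  | disj _ _ => True
  | par _ t₁ t₂ => hasTau t₁ ∨ hasTau t₂

/-- The transition relation, given by the SOS rules of CLL_R. -/
inductive Trans : Proc Act → ActT Act → Proc Act → Prop where
  | pre : Trans (pre α t) α t
  | ecL : Trans t₁ (ActT.act a) t₁' → ¬ hasTau t₂ →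
      Trans (ec t₁ t₂) (ActT.act a) t₁'
  | ecR : ¬ hasTau t₁ → Trans t₂ (ActT.act a) t₂' →
      Trans (ec t₁ t₂) (ActT.act a) t₂'
  | ecTauL : Trans t₁ ActT.tau t₁' → Trans (ec t₁ t₂) ActT.tau (ec t₁' t₂)
  | ecTauR : Trans t₂ ActT.tau t₂' → Trans (ec t₁ t₂) ActT.tau (ec t₁ t₂')
  | conjAct : Trans t₁ (ActT.act a) t₁' → Trans t₂ (ActT.act a) t₂' →
      Trans (conj t₁ t₂) (ActT.act a) (conj t₁' t₂')
  | conjTauL : Trans t₁ ActT.tau t₁' → Trans (conj t₁ t₂) ActT.tau (conj t₁' t₂)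
  | conjTauR : Trans t₂ ActT.tau t₂' → Trans (conj t₁ t₂) ActT.tau (conj t₁ t₂')
  | disjL : Trans (disj t₁ t₂) ActT.tau t₁
  | disjR : Trans (disj t₁ t₂) ActT.tau t₂
  | parTauL : Trans t₁ ActT.tau t₁' → Trans (par A t₁ t₂) ActT.tau (par A t₁' t₂)
  | parTauR : Trans t₂ ActT.tau t₂' → Trans (par A t₁ t₂) ActT.tau (par A t₁ t₂')
  | parL : a ∉ A → Trans t₁ (ActT.act a) t₁' → ¬ hasTau t₂ →
      Trans (par A t₁ t₂) (ActT.act a) (par A t₁' t₂)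
  | parR : a ∉ A → ¬ hasTau t₁ → Trans t₂ (ActT.act a) t₂' →
      Trans (par A t₁ t₂) (ActT.act a) (par A t₁ t₂')
  | parSync : a ∈ A → Trans t₁ (ActT.act a) t₁' → Trans t₂ (ActT.act a) t₂' →
      Trans (par A t₁ t₂) (ActT.act a) (par A t₁' t₂')

/-- The ready set I(p). -/
def ready (p : Proc Act) : Set (ActT Act) := {α | ∃ q, Trans p α q}

/-- p is stable if it has no τ-transition. -/
def Stable (p : Proc Act) : Prop := ∀ q, ¬ Trans p ActT.tau q

/-- The inconsistency predicate F, as the least predicate closed under the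
predicative rules of CLL_R. -/
inductive Fp : Proc Act → Prop where
  | bot : Fp bot
  | pre : Fp t → Fp (pre α t)
  | disj : Fp t₁ → Fp t₂ → Fp (disj t₁ t₂)
  | ecL : Fp t₁ → Fp (ec t₁ t₂)
  | ecR : Fp t₂ → Fp (ec t₁ t₂)
  | parL : Fp t₁ → Fp (par A t₁ t₂)
  | parR : Fp t₂ → Fp (par A t₁ t₂)
  | conjL : Fp t₁ → Fp (conj t₁ t₂)
  | conjR : Fp t₂ → Fp (conj t₁ t₂)
  | conjReady : Stable (conj t₁ t₂) → ready t₁ ≠ ready t₂ → Fp (conj t₁ t₂)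
  | conjSucc : Trans (conj t₁ t₂) α s → (∀ y, Trans (conj t₁ t₂) α y → Fp y) →
      Fp (conj t₁ t₂)
  | conjStable :
      (∀ y, Relation.ReflTransGen (fun x z => Trans x ActT.tau z) (conj t₁ t₂) y →
        Stable y → Fp y) →
      Fp (conj t₁ t₂)

/-- One τ-step with both endpoints consistent. -/
def tauStepF (p q : Proc Act) : Prop := Trans p ActT.tau q ∧ ¬ Fp p ∧ ¬ Fp q

/-- p ⇒_F| q : a sequence of τ-transitions from p to q, all states outside F,
with q stable. -/
def epsF (p q : Proc Act) : Prop :=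
  Relation.ReflTransGen tauStepF p q ∧ ¬ Fp p ∧ ¬ Fp q ∧ Stable q

/-- p =a⇒_F| q. -/
def wkF (a : Act) (p q : Proc Act) : Prop :=
  ∃ r s, Relation.ReflTransGen tauStepF p r ∧ ¬ Fp p ∧ ¬ Fp r ∧
    Trans r (ActT.act a) s ∧ ¬ Fp s ∧
    Relation.ReflTransGen tauStepF s q ∧ ¬ Fp q ∧ Stable q

/-- R is a stable ready simulation. -/
def StableRS (R : Proc Act → Proc Act → Prop) : Prop :=
  ∀ p q, R p q →
    Stable p ∧ Stable q ∧
    (¬ Fp p → ¬ Fp q) ∧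
    (∀ a p', wkF a p p' → ∃ q', wkF a q q' ∧ R p' q') ∧
    (¬ Fp p → ready p = ready q)

/-- p ⊏̃_RS q. -/
def rsLT (p q : Proc Act) : Prop := ∃ R, StableRS R ∧ R p q

/-- p ⊑_RS q. -/
def rsLE (p q : Proc Act) : Prop :=
  ∀ p', epsF p p' → ∃ q', epsF q q' ∧ rsLT p' q'

/-- p =_RS q. -/
def rsEq (p q : Proc Act) : Prop := rsLE p q ∧ rsLE q p

/-- Basic process terms T(Σ_B): no ⊥ and no ∧. -/
inductive Basic : Proc Act → Prop where
  | nil : Basic nil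
  | pre : Basic t → Basic (pre α t)
  | disj : Basic t₁ → Basic t₂ → Basic (disj t₁ t₂)
  | ec : Basic t₁ → Basic t₂ → Basic (ec t₁ t₂)
  | par : Basic t₁ → Basic t₂ → Basic (par A t₁ t₂)

/-- General external choice □ over a finite sequence (left-nested). -/
def ecList : List (Proc Act) → Proc Act
  | [] => nil
  | t :: ts => ts.foldl ec t

/-- General disjunction ⋁ over a nonempty finite sequence (left-nested). -/
def djList : List (Proc Act) → Proc Act
  | [] => bot
  | t :: ts => ts.foldl disj t

/-- □_{i<n} a_i.t_i for a sequence of prefixed terms. -/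
def ecPre (l : List (Act × Proc Act)) : Proc Act :=
  ecList (l.map fun x => pre (ActT.act x.1) x.2)

/-- The expansion term E = ((□Ω₁) □ (□Ω₂)) □ (□Ω₃). -/
noncomputable def expTerm (A : Set Act) (l₁ l₂ : List (Act × Proc Act)) : Proc Act :=
  ec (ec
      (ecList ((l₁.filter fun x => decide (x.1 ∉ A)).map
        fun x => pre (ActT.act x.1) (par A x.2 (ecPre l₂))))
      (ecList ((l₂.filter fun x => decide (x.1 ∉ A)).map
        fun x => pre (ActT.act x.1) (par A (ecPre l₁) x.2))))
    (ecList (l₁.flatMap fun x =>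
      (l₂.filter fun y => decide (y.1 = x.1 ∧ x.1 ∈ A)).map
        fun y => pre (ActT.act x.1) (par A x.2 y.2)))

/-- Normal forms NF_B. -/
inductive NFB : Proc Act → Prop where
  | mk (ls : List (List (Act × Proc Act))) (hne : ls ≠ [])
      (hnodup : ∀ l ∈ ls, (l.map Prod.fst).Nodup)
      (hsub : ∀ l ∈ ls, ∀ x ∈ l, NFB x.2) :
      NFB (djList (ls.map ecPre))

/-- NF = NF_B ∪ {⊥}. -/
def NF (p : Proc Act) : Prop := NFB p ∨ p = bot

/-- Derivability ⊢ t ≤ t' in the proof system AX_CLL. -/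
inductive Deriv : Proc Act → Proc Act → Prop where
  | refl (t) : Deriv t t
  | trans : Deriv t t' → Deriv t' t'' → Deriv t t''
  | mono_pre : Deriv t t' → Deriv (pre α t) (pre α t')
  | mono_ec : Deriv s s' → Deriv t t' → Deriv (ec s t) (ec s' t')
  | mono_conj : Deriv s s' → Deriv t t' → Deriv (conj s t) (conj s' t')
  | mono_disj : Deriv s s' → Deriv t t' → Deriv (disj s t) (disj s' t')
  | mono_par : Deriv s s' → Deriv t t' → Deriv (par A s t) (par A s' t')
  -- external choice
  | ec_comm : Deriv (ec x y) (ec y x)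
  | ec_assoc₁ : Deriv (ec (ec x y) z) (ec x (ec y z))
  | ec_assoc₂ : Deriv (ec x (ec y z)) (ec (ec x y) z)
  | ec_idem₁ : Deriv (ec x x) x
  | ec_idem₂ : Deriv x (ec x x)
  | ec_nil₁ : Deriv (ec x nil) x
  | ec_nil₂ : Deriv x (ec x nil)
  | ec_bot₁ : Deriv (ec x bot) bot
  | ec_bot₂ : Deriv bot (ec x bot)
  -- disjunction
  | disj_comm : Deriv (disj x y) (disj y x)
  | disj_assoc₁ : Deriv (disj x (disj y z)) (disj (disj x y) z)
  | disj_assoc₂ : Deriv (disj (disj x y) z) (disj x (disj y z))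
  | disj_idem₁ : Deriv (disj x x) x
  | disj_idem₂ : Deriv x (disj x x)
  | disj_bot₁ : Deriv (disj x bot) x
  | disj_bot₂ : Deriv x (disj x bot)
  | disj_le : Deriv x (disj x y)
  -- conjunction
  | conj_comm : Deriv (conj x y) (conj y x)
  | conj_idem₁ : Deriv (conj x x) x
  | conj_idem₂ : Deriv x (conj x x)
  | conj_bot₁ : Deriv (conj x bot) bot
  | conj_bot₂ : Deriv bot (conj x bot)
  -- prefixing
  | pre_bot₁ : Deriv (pre (ActT.act a) bot) bot
  | pre_bot₂ : Deriv bot (pre (ActT.act a) bot)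
  | tau_pre₁ : Deriv (pre ActT.tau x) x
  | tau_pre₂ : Deriv x (pre ActT.tau x)
  -- parallel
  | par_comm : Deriv (par A x y) (par A y x)
  | par_bot₁ : Deriv (par A x bot) bot
  | par_bot₂ : Deriv bot (par A x bot)
  -- distribution over disjunction
  | ds_ec : Deriv (ec x (disj y z)) (disj (ec x y) (ec x z))
  | ds_conj : Deriv (conj x (disj y z)) (disj (conj x y) (conj x z))
  | ds_par : Deriv (par A x (disj y z)) (disj (par A x y) (par A x z))
  | ds_pre : Basic x → Basic y →
      Deriv (pre (ActT.act a) (disj x y)) (ec (pre (ActT.act a) x) (pre (ActT.act a) y))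
  -- external choice and conjunction
  | ecc1₁ (l₁ l₂ : List (Act × Proc Act)) :
      {a | a ∈ l₁.map Prod.fst} ≠ {a | a ∈ l₂.map Prod.fst} →
      Deriv (conj (ecPre l₁) (ecPre l₂)) bot
  | ecc1₂ (l₁ l₂ : List (Act × Proc Act)) :
      {a | a ∈ l₁.map Prod.fst} ≠ {a | a ∈ l₂.map Prod.fst} →
      Deriv bot (conj (ecPre l₁) (ecPre l₂))
  | ecc2 (l : List (Act × Proc Act × Proc Act)) :
      Deriv (ecPre (l.map fun x => (x.1, conj x.2.1 x.2.2)))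
            (conj (ecPre (l.map fun x => (x.1, x.2.1)))
                  (ecPre (l.map fun x => (x.1, x.2.2))))
  | ecc3 (l : List (Act × Proc Act × Proc Act)) :
      (l.map Prod.fst).Nodup →
      Deriv (conj (ecPre (l.map fun x => (x.1, x.2.1)))
                  (ecPre (l.map fun x => (x.1, x.2.2))))
            (ecPre (l.map fun x => (x.1, conj x.2.1 x.2.2)))
  -- expansion
  | exp1 (A : Set Act) (l₁ l₂ : List (Act × Proc Act)) :
      Deriv (par A (ecPre l₁) (ecPre l₂)) (expTerm A l₁ l₂)
  | exp2 (A : Set Act) (l₁ l₂ : List (Act × Proc Act)) :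
      (∀ x ∈ l₁, Basic x.2) → (∀ x ∈ l₂, Basic x.2) →
      Deriv (expTerm A l₁ l₂) (par A (ecPre l₁) (ecPre l₂))

end Proc

/-!
Both sides are stable, and the summands of `Ω₁`, `Ω₂`, `Ω₃` are exactly the interleaving and
synchronising moves of `□ aᵢ.pᵢ ∥_A □ bⱼ.qⱼ`, so the two sides have the same visible
transitions. Pairing stable processes with equal visible transitions (consistency passing from
left to right) is therefore a stable ready simulation. Consistency does pass: an inconsistent
`pᵢ` with `aᵢ ∈ A` has, by the side condition, a partner `bⱼ = aᵢ`, and then the summand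
`aᵢ.(pᵢ ∥_A qⱼ)` of `Ω₃` is inconsistent too.
-/

namespace Proc

variable {Act : Type}

theorem hasTau_of_trans_tau {p u : Proc Act} (h : Trans p ActT.tau u) : hasTau p := by
  generalize hα : (ActT.tau : ActT Act) = α at h
  induction h <;> simp_all [hasTau]

theorem stable_of_not_hasTau {p : Proc Act} (h : ¬ hasTau p) : Stable p :=
  fun _ ht => h (hasTau_of_trans_tau ht)

theorem eq_of_stable_of_reflTransGen {p r : Proc Act} (hp : Stable p)
    (h : Relation.ReflTransGen tauStepF p r) : r = p := by
  rcases h.cases_head with rfl | ⟨c, hc, -⟩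
  · rfl
  · exact absurd hc.1 (hp c)

theorem trans_pre_iff {α β : ActT Act} {t u : Proc Act} :
    Trans (pre α t) β u ↔ β = α ∧ u = t :=
  ⟨fun h => by cases h; exact ⟨rfl, rfl⟩, fun ⟨hβ, hu⟩ => hβ ▸ hu ▸ Trans.pre⟩

theorem trans_ec_act_iff {t₁ t₂ u : Proc Act} {a : Act} (h₁ : ¬ hasTau t₁) (h₂ : ¬ hasTau t₂) :
    Trans (ec t₁ t₂) (ActT.act a) u ↔ Trans t₁ (ActT.act a) u ∨ Trans t₂ (ActT.act a) u := by
  constructor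
  · intro h
    cases h with
    | ecL h _ => exact Or.inl h
    | ecR _ h => exact Or.inr h
  · rintro (h | h)
    exacts [Trans.ecL h h₂, Trans.ecR h₁ h]

theorem not_fp_nil : ¬ Fp (nil : Proc Act) := nofun

theorem fp_pre_iff {α : ActT Act} {t : Proc Act} : Fp (pre α t) ↔ Fp t :=
  ⟨fun h => by cases h; assumption, Fp.pre⟩

theorem fp_ec_iff {t₁ t₂ : Proc Act} : Fp (ec t₁ t₂) ↔ Fp t₁ ∨ Fp t₂ :=
  ⟨fun h => by cases h <;> simp_all, fun h => h.elim Fp.ecL Fp.ecR⟩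

theorem fp_par_iff {A : Set Act} {t₁ t₂ : Proc Act} : Fp (par A t₁ t₂) ↔ Fp t₁ ∨ Fp t₂ :=
  ⟨fun h => by cases h <;> simp_all, fun h => h.elim Fp.parL Fp.parR⟩

section ExternalChoice

variable {P Q : Proc Act → Prop}

theorem foldl_ec_iff (hQ : ∀ x y, Q x → Q y → Q (ec x y))
    (hP : ∀ x y, Q x → Q y → (P (ec x y) ↔ P x ∨ P y)) {l : List (Proc Act)} :
    ∀ {t}, Q t → (∀ s ∈ l, Q s) → (P (l.foldl ec t) ↔ P t ∨ ∃ s ∈ l, P s) := by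
  induction l with
  | nil => simp
  | cons s l ih =>
    intro t ht hl
    have hs : Q s := hl s List.mem_cons_self
    rw [List.foldl_cons, ih (hQ _ _ ht hs) (fun s' h => hl s' (List.mem_cons_of_mem _ h)),
      hP _ _ ht hs]
    simp [or_assoc]

theorem ecList_iff (hQ : ∀ x y, Q x → Q y → Q (ec x y))
    (hP : ∀ x y, Q x → Q y → (P (ec x y) ↔ P x ∨ P y)) (hnil : ¬ P nil)
    {l : List (Proc Act)} (hl : ∀ s ∈ l, Q s) : P (ecList l) ↔ ∃ s ∈ l, P s := by
  cases l with
  | nil => simpa [ecList]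
  | cons t l =>
    rw [ecList, foldl_ec_iff hQ hP (hl t List.mem_cons_self)
      (fun s h => hl s (List.mem_cons_of_mem _ h))]
    simp

end ExternalChoice

theorem not_hasTau_ecPre (l : List (Act × Proc Act)) : ¬ hasTau (ecPre l) := by
  rw [ecPre, ecList_iff (P := hasTau) (Q := fun _ => True) (fun _ _ _ _ => trivial)
    (fun _ _ _ _ => Iff.rfl) not_false (fun _ _ => trivial)]
  simp [hasTau]

theorem fp_ecPre_iff {l : List (Act × Proc Act)} : Fp (ecPre l) ↔ ∃ x ∈ l, Fp x.2 := by
  rw [ecPre, ecList_iff (P := Fp) (Q := fun _ => True) (fun _ _ _ _ => trivial)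
    (fun _ _ _ _ => fp_ec_iff) not_fp_nil (fun _ _ => trivial)]
  simp [fp_pre_iff]

theorem trans_ecPre_iff {l : List (Act × Proc Act)} {a : Act} {u : Proc Act} :
    Trans (ecPre l) (ActT.act a) u ↔ (a, u) ∈ l := by
  rw [ecPre, ecList_iff (P := (Trans · (ActT.act a) u)) (Q := fun s => ¬ hasTau s)
    (fun _ _ hx hy h => h.elim hx hy) (fun _ _ => trans_ec_act_iff) nofun
    (List.forall_mem_map.2 fun _ _ => by simp [hasTau])]
  simp [trans_pre_iff, and_comm, eq_comm]

section Expansion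

variable (A : Set Act) (l₁ l₂ : List (Act × Proc Act))

/-- `Ω₁`, `Ω₂`, `Ω₃` of the expansion term, as lists of (action, continuation) pairs. -/
noncomputable def leftSteps : List (Act × Proc Act) :=
  (l₁.filter fun x => decide (x.1 ∉ A)).map fun x => (x.1, par A x.2 (ecPre l₂))

noncomputable def rightSteps : List (Act × Proc Act) :=
  (l₂.filter fun y => decide (y.1 ∉ A)).map fun y => (y.1, par A (ecPre l₁) y.2)

noncomputable def syncSteps : List (Act × Proc Act) :=
  l₁.flatMap fun x =>
    (l₂.filter fun y => decide (y.1 = x.1 ∧ x.1 ∈ A)).map fun y => (x.1, par A x.2 y.2)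

theorem expTerm_eq :
    expTerm A l₁ l₂ = ec (ec (ecPre (leftSteps A l₁ l₂)) (ecPre (rightSteps A l₁ l₂)))
      (ecPre (syncSteps A l₁ l₂)) := by
  simp [expTerm, ecPre, leftSteps, rightSteps, syncSteps, List.map_flatMap, Function.comp_def]

variable {A l₁ l₂} {a : Act} {u : Proc Act}

theorem mem_leftSteps :
    (a, u) ∈ leftSteps A l₁ l₂ ↔ a ∉ A ∧ ∃ p, (a, p) ∈ l₁ ∧ u = par A p (ecPre l₂) := by
  simp only [leftSteps, List.mem_map, List.mem_filter, decide_eq_true_eq, Prod.ext_iff]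
  aesop

theorem mem_rightSteps :
    (a, u) ∈ rightSteps A l₁ l₂ ↔ a ∉ A ∧ ∃ q, (a, q) ∈ l₂ ∧ u = par A (ecPre l₁) q := by
  simp only [rightSteps, List.mem_map, List.mem_filter, decide_eq_true_eq, Prod.ext_iff]
  aesop

theorem mem_syncSteps :
    (a, u) ∈ syncSteps A l₁ l₂ ↔ a ∈ A ∧ ∃ p q, (a, p) ∈ l₁ ∧ (a, q) ∈ l₂ ∧ u = par A p q := by
  simp only [syncSteps, List.mem_flatMap, List.mem_map, List.mem_filter, decide_eq_true_eq,
    Prod.ext_iff]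
  aesop

theorem trans_par_ecPre_iff : Trans (par A (ecPre l₁) (ecPre l₂)) (ActT.act a) u ↔
    (a, u) ∈ leftSteps A l₁ l₂ ∨ (a, u) ∈ rightSteps A l₁ l₂ ∨ (a, u) ∈ syncSteps A l₁ l₂ := by
  rw [mem_leftSteps, mem_rightSteps, mem_syncSteps]
  constructor
  · intro h
    cases h with
    | parL hA h _ => exact Or.inl ⟨hA, _, trans_ecPre_iff.1 h, rfl⟩
    | parR hA _ h => exact Or.inr (Or.inl ⟨hA, _, trans_ecPre_iff.1 h, rfl⟩)
    | parSync hA h₁ h₂ =>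
      exact Or.inr (Or.inr ⟨hA, _, _, trans_ecPre_iff.1 h₁, trans_ecPre_iff.1 h₂, rfl⟩)
  · rintro (⟨hA, p, hp, rfl⟩ | ⟨hA, q, hq, rfl⟩ | ⟨hA, p, q, hp, hq, rfl⟩)
    · exact Trans.parL hA (trans_ecPre_iff.2 hp) (not_hasTau_ecPre l₂)
    · exact Trans.parR hA (not_hasTau_ecPre l₁) (trans_ecPre_iff.2 hq)
    · exact Trans.parSync hA (trans_ecPre_iff.2 hp) (trans_ecPre_iff.2 hq)

theorem trans_expTerm_iff : Trans (expTerm A l₁ l₂) (ActT.act a) u ↔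
    (a, u) ∈ leftSteps A l₁ l₂ ∨ (a, u) ∈ rightSteps A l₁ l₂ ∨ (a, u) ∈ syncSteps A l₁ l₂ := by
  have hleft : ¬ hasTau (ec (ecPre (leftSteps A l₁ l₂)) (ecPre (rightSteps A l₁ l₂))) :=
    not_or.2 ⟨not_hasTau_ecPre _, not_hasTau_ecPre _⟩
  rw [expTerm_eq, trans_ec_act_iff hleft (not_hasTau_ecPre _),
    trans_ec_act_iff (not_hasTau_ecPre _) (not_hasTau_ecPre _), trans_ecPre_iff, trans_ecPre_iff,
    trans_ecPre_iff, or_assoc]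

theorem not_hasTau_expTerm : ¬ hasTau (expTerm A l₁ l₂) := by
  simp only [expTerm_eq, hasTau, not_hasTau_ecPre, or_self, not_false_eq_true]

theorem fp_expTerm_of_fp_par
    (h₁ : ∀ x ∈ l₁, x.1 ∈ A → (∀ y ∈ l₂, y.1 ≠ x.1) → ¬ Fp x.2)
    (h₂ : ∀ y ∈ l₂, y.1 ∈ A → (∀ x ∈ l₁, x.1 ≠ y.1) → ¬ Fp y.2)
    (hF : Fp (par A (ecPre l₁) (ecPre l₂))) : Fp (expTerm A l₁ l₂) := by
  rw [expTerm_eq, fp_ec_iff, fp_ec_iff, fp_ecPre_iff, fp_ecPre_iff, fp_ecPre_iff]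
  rw [fp_par_iff, fp_ecPre_iff, fp_ecPre_iff] at hF
  rcases hF with ⟨⟨a, p⟩, hp, hF⟩ | ⟨⟨b, q⟩, hq, hF⟩
  · by_cases hA : a ∈ A
    · obtain ⟨⟨b, q⟩, hq, rfl⟩ : ∃ y ∈ l₂, y.1 = a := by
        by_contra! h
        exact h₁ _ hp hA h hF
      exact Or.inr ⟨_, mem_syncSteps.2 ⟨hA, p, q, hp, hq, rfl⟩, Fp.parL hF⟩
    · exact Or.inl (Or.inl ⟨_, mem_leftSteps.2 ⟨hA, p, hp, rfl⟩, Fp.parL hF⟩)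
  · by_cases hA : b ∈ A
    · obtain ⟨⟨a, p⟩, hp, rfl⟩ : ∃ x ∈ l₁, x.1 = b := by
        by_contra! h
        exact h₂ _ hq hA h hF
      exact Or.inr ⟨_, mem_syncSteps.2 ⟨hA, p, q, hp, hq, rfl⟩, Fp.parR hF⟩
    · exact Or.inl (Or.inr ⟨_, mem_rightSteps.2 ⟨hA, q, hq, rfl⟩, Fp.parR hF⟩)

end Expansion

theorem stableRS_of_trans_iff : StableRS fun p q : Proc Act =>
    Stable p ∧ Stable q ∧ (¬ Fp p → ¬ Fp q) ∧
      ∀ a u, Trans p (ActT.act a) u ↔ Trans q (ActT.act a) u := by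
  rintro p q ⟨hp, hq, hF, hsteps⟩
  refine ⟨hp, hq, hF, ?_, fun _ => ?_⟩
  · rintro a p' ⟨r, s, hpr, hnp, -, hrs, hns, hsp', hnp', hp'⟩
    obtain rfl := eq_of_stable_of_reflTransGen hp hpr
    exact ⟨p', ⟨q, s, .refl, hF hnp, hF hnp, (hsteps a s).1 hrs, hns, hsp', hnp', hp'⟩,
      hp', hp', id, fun _ _ => Iff.rfl⟩
  · ext (_ | _)
    · exact exists_congr (hsteps _)
    · exact ⟨fun ⟨u, h⟩ => absurd h (hp u), fun ⟨u, h⟩ => absurd h (hq u)⟩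

theorem rsLE_of_trans_iff {p q : Proc Act} (hp : Stable p) (hq : Stable q)
    (hF : ¬ Fp p → ¬ Fp q) (hsteps : ∀ a u, Trans p (ActT.act a) u ↔ Trans q (ActT.act a) u) :
    rsLE p q := by
  rintro p' ⟨hpp', hnp, -, -⟩
  obtain rfl := eq_of_stable_of_reflTransGen hp hpp'
  exact ⟨q, ⟨.refl, hF hnp, hF hnp, hq⟩, _, stableRS_of_trans_iff, hp, hq, hF, hsteps⟩

/-- Converse expansion inequality under a consistency side-condition. -/
theorem stmt13 {Act : Type} (A : Set Act) (l₁ l₂ : List (Act × Proc Act))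
    (h₁ : ∀ x ∈ l₁, x.1 ∈ A → (∀ y ∈ l₂, y.1 ≠ x.1) → ¬ Fp x.2)
    (h₂ : ∀ y ∈ l₂, y.1 ∈ A → (∀ x ∈ l₁, x.1 ≠ y.1) → ¬ Fp y.2) :
    rsLE (expTerm A l₁ l₂) (par A (ecPre l₁) (ecPre l₂)) :=
  rsLE_of_trans_iff (stable_of_not_hasTau not_hasTau_expTerm)
    (stable_of_not_hasTau (not_or.2 ⟨not_hasTau_ecPre l₁, not_hasTau_ecPre l₂⟩))
    (fun hE hP => hE (fp_expTerm_of_fp_par h₁ h₂ hP))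
    (fun _ _ => trans_expTerm_iff.trans trans_par_ecPre_iff.symm)

end Proc
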